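/- Let ν ≡ 2 (mod 6) be a positive integer. Then there exists a partial triple system PTS(ν,3) with exactly (3·C(ν,2) − ν/2 − 2)/3 triples whose leave consists of ν/2 pairwise disjoint edges: the vertex set can be partitioned into ν/2 pairs, one of which is contained in no triple and the other (ν−2)/2 of which are each contained in exactly two triples, while every pair of vertices not in the partition is contained in exactly three triples (counted with multiplicity). -/

import Mathlib

/-- The function `g(ν, λ, s)` from the paper. -/
noncomputable def gfun (ν lam s : ℕ) : ℤ :=
  if ν ≤ 2 then 0
  else if (ν % 6 = 0 ∧ lam % 2 = 1) ∨
          (ν % 6 = 2 ∧ (lam % 6 = 1 ∨ lam % 6 = 3)) ∨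
          (ν % 6 = 2 ∧ lam % 6 = 5 ∧ s < ν / 2) ∨
          (ν % 6 = 4 ∧ lam % 2 = 1 ∧ s < ν / 2) then
    ⌊(lam : ℚ) / 3 * (ν.choose 2 : ℚ) - (ν : ℚ) / 6⌋
  else if (ν % 6 = 2 ∧ lam % 6 = 5 ∧ s = ν / 2) ∨
          (ν % 6 = 4 ∧ lam % 2 = 1 ∧ s = ν / 2) then
    ⌊(lam : ℚ) / 3 * (ν.choose 2 : ℚ) - (ν : ℚ) / 6⌋ - 1
  else if (ν % 6 = 2 ∧ lam % 6 = 4 ∧ s = 0) ∨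
          (ν % 6 = 5 ∧ lam % 3 = 1 ∧ s = 0) then
    ⌊(lam : ℚ) / 3 * (ν.choose 2 : ℚ)⌋ - 1
  else ⌊(lam : ℚ) / 3 * (ν.choose 2 : ℚ) - 2 * (s : ℚ) / 3⌋

/-- The function `f(n, ν, Δ₂)` from the paper. -/
noncomputable def ffun (n ν Δ : ℕ) : ℤ :=
  ⌊(ν : ℚ) * ((n : ℚ) - (ν : ℚ)) * (Δ : ℚ) / 2⌋ +
  if Even ((n - ν) * Δ) ∨ Even ν then gfun ν Δ 0 else gfun ν Δ (ν / 2)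

/-- The codegree of a pair `p` of vertices in a 3-multigraph `H`: the number of
triples of `H` (with multiplicity) containing `p`. -/
def codegPair {V : Type*} [DecidableEq V] (H : Multiset (Finset V)) (p : Finset V) : ℕ :=
  Multiset.card (H.filter fun t => p ⊆ t)

/-!
Write `ν = 6k + 2` and `n = 2k + 1`. Bose's construction over `ℤ/n × ℤ/3`, with the idempotent
quasigroup `(x + y)/2`, is a Steiner triple system on `6k + 3` points. Deleting its blocks through
`z = (0, 0)` leaves a `PTS(ν, 1)` whose leave is the perfect matching `{{a, b} | {z, a, b} is a
block}`: the axis pair `{(0,1), (0,2)}`, the rungs `{(x,2), (-x,2)}` and the arcs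
`{(2v,0), (v,1)}`. The permutation `σ = rot` fixing the points `(0, l)` and cycling
`(2v,0) ↦ (v,1) ↦ (2v,2) ↦ (2v,0)` for `v ≠ 0` moves the rungs of one level to the next and the
arcs around the orbit triangles `{(2v,0), (v,1), (2v,2)}`. So in the union of the three copies
`σʲ` of the derived system, the axis pair has codegree `0`, each rung codegree `2`, the edges of the
orbit triangles codegree `2` and all other pairs codegree `3`; adding the orbit triangles as blocks
gives the required `PTS(ν, 3)`, and its number of triples follows from the codegrees by double
counting.
-/

open Finset

lemma exists_fin_three {P : Fin 3 → Prop} : (∃ l, P l) ↔ P 0 ∨ P 1 ∨ P 2 :=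
  ⟨fun ⟨l, h⟩ => by fin_cases l <;> simp_all, by rintro (h | h | h) <;> exact ⟨_, h⟩⟩

lemma Finset.pair_eq_pair_iff {V : Type*} [DecidableEq V] {a b c d : V} :
    ({a, b} : Finset V) = {c, d} ↔ a = c ∧ b = d ∨ a = d ∧ b = c := by
  rw [← coe_inj, coe_pair, coe_pair, Set.pair_eq_pair_iff]

lemma pair_eq_or_of_insert_eq {V : Type*} [DecidableEq V] {z a b c d : V}
    (h : (insert z {a, b} : Finset V) = insert z {c, d}) (ha : a ≠ z) (hb : b ≠ z) (hc : c ≠ z)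
    (hd : d ≠ z) : a = c ∧ b = d ∨ a = d ∧ b = c := by
  have hpair : ({a, b} : Finset V) = {c, d} := by
    rw [← erase_insert (s := {a, b}) (a := z) (by simp [ha.symm, hb.symm]), h,
      erase_insert (by simp [hc.symm, hd.symm])]
  exact Finset.pair_eq_pair_iff.mp hpair

lemma map_preimage_of_subset_range {V W : Type*} (ι : W ↪ V) {t : Finset V}
    (ht : ↑t ⊆ Set.range ι) : (t.preimage ι ι.injective.injOn).map ι = t := by
  ext v
  simp only [mem_map, mem_preimage]
  constructor
  · rintro ⟨w, hw, rfl⟩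
    exact hw
  · intro hv
    obtain ⟨w, rfl⟩ := ht hv
    exact ⟨w, hv, rfl⟩

section Codegree

variable {V : Type*} [DecidableEq V]

lemma codegPair_add (H H' : Multiset (Finset V)) (e : Finset V) :
    codegPair (H + H') e = codegPair H e + codegPair H' e := by
  simp [codegPair, Multiset.filter_add]

lemma codegPair_map_equiv (σ : V ≃ V) (H : Multiset (Finset V)) (e : Finset V) :
    codegPair (H.map (map σ.toEmbedding)) e = codegPair H (e.map σ.symm.toEmbedding) := by
  unfold codegPair
  rw [Multiset.filter_map, Multiset.card_map]
  congr 2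
  ext t
  exact map_symm_subset.symm

lemma codegPair_map_preimage {W : Type*} [DecidableEq W] (ι : W ↪ V) (H : Multiset (Finset V))
    (e : Finset W) :
    codegPair (H.map fun t => t.preimage ι ι.injective.injOn) e = codegPair H (e.map ι) := by
  unfold codegPair
  rw [Multiset.filter_map, Multiset.card_map]
  congr 2
  ext t
  simp [map_subset_iff_subset_preimage]

lemma codegPair_val (S : Finset (Finset V)) (e : Finset V) :
    codegPair S.val e = (S.filter (e ⊆ ·)).card := by
  rw [codegPair, ← filter_val, card_val]

lemma codegPair_filter_notMem_add (H : Multiset (Finset V)) (z : V) (e : Finset V) :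
    codegPair (H.filter (z ∉ ·)) e + codegPair H (insert z e) = codegPair H e := by
  simp only [codegPair, Multiset.filter_filter, insert_subset_iff]
  rw [← Multiset.card_add, ← Multiset.filter_add_not (z ∈ ·) (H.filter (e ⊆ ·)),
    Multiset.filter_filter, Multiset.filter_filter, add_comm]
  congr 2
  ext t
  simp only [and_comm]

lemma codegPair_val_eq_ite {S : Finset (Finset V)} {n : ℕ} (hS : ∀ t ∈ S, t.card = n)
    {e : Finset V} (he : e.card = n) : codegPair S.val e = if e ∈ S then 1 else 0 := by
  have : S.filter (e ⊆ ·) = S.filter (e = ·) :=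
    filter_congr fun t ht =>
      ⟨fun h => eq_of_subset_of_card_le h (by rw [hS t ht, he]), fun h => h ▸ subset_rfl⟩
  rw [codegPair_val, this, filter_eq]
  split_ifs <;> simp

lemma three_mul_card_eq_sum_codegPair [Fintype V] (H : Multiset (Finset V))
    (hH : ∀ t ∈ H, t.card = 3) :
    3 * Multiset.card H = ∑ e ∈ powersetCard 2 univ, codegPair H e := by
  induction H using Multiset.induction_on with
  | empty => simp [codegPair]
  | cons t H ih =>
    have hpairs : ∑ e ∈ powersetCard 2 univ, (if e ⊆ t then 1 else 0) = 3 := by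
      have hfilter : (powersetCard 2 univ).filter (· ⊆ t) = powersetCard 2 t := by
        ext e
        simp [mem_powersetCard, and_comm]
      rw [sum_boole, Nat.cast_id, hfilter, card_powersetCard, hH t (Multiset.mem_cons_self t H)]
      rfl
    simp only [codegPair, Multiset.filter_cons, Multiset.card_add, Multiset.card_cons] at ih ⊢
    rw [sum_add_distrib, ← ih fun s hs => hH s (Multiset.mem_cons_of_mem hs)]
    simp only [apply_ite Multiset.card, Multiset.card_singleton, Multiset.card_zero]
    omega

lemma two_mul_card_eq_of_partition [Fintype V] {P : Finset (Finset V)}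
    (hcard : ∀ p ∈ P, p.card = 2) (hdisj : ∀ p ∈ P, ∀ q ∈ P, p ≠ q → Disjoint p q)
    (hcover : ∀ x, ∃ p ∈ P, x ∈ p) : 2 * P.card = Fintype.card V := by
  have hunion : P.biUnion id = univ :=
    eq_univ_of_forall fun x => mem_biUnion.mpr (hcover x)
  rw [← card_univ, ← hunion, card_biUnion (t := id) fun p hp q hq hpq => hdisj p hp q hq hpq,
    mul_comm]
  exact (sum_const_nat hcard).symm

end Codegree

section MatchingLeave

variable {V : Type*} [DecidableEq V]

/-- On the points of `s`, `H` is a `PTS(|s|, 3)` whose leave is the perfect matching `P` of `s`,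
with the edge `p₀` of multiplicity three. -/
structure IsMatchingLeave (s : Set V) (H : Multiset (Finset V)) (P : Finset (Finset V))
    (p₀ : Finset V) : Prop where
  card_eq_three : ∀ t ∈ H, t.card = 3
  subset_of_mem : ∀ t ∈ H, ↑t ⊆ s
  card_eq_two : ∀ p ∈ P, p.card = 2
  pair_subset : ∀ p ∈ P, ↑p ⊆ s
  disjoint : ∀ p ∈ P, ∀ q ∈ P, p ≠ q → Disjoint p q
  exists_mem : ∀ x ∈ s, ∃ p ∈ P, x ∈ p
  mem : p₀ ∈ P
  codegPair_eq : ∀ x ∈ s, ∀ y ∈ s, x ≠ y →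
    codegPair H {x, y} = if {x, y} = p₀ then 0 else if {x, y} ∈ P then 2 else 3

variable {H : Multiset (Finset V)} {P : Finset (Finset V)} {p₀ : Finset V}

theorem IsMatchingLeave.comap {W : Type*} [DecidableEq W] [Fintype W] {s : Set V}
    (h : IsMatchingLeave s H P p₀) (ι : W ↪ V) (hι : Set.range ι = s) :
    IsMatchingLeave Set.univ (H.map fun t => t.preimage ι ι.injective.injOn)
      (univ.filter fun q => q.map ι ∈ P) (p₀.preimage ι ι.injective.injOn) := by
  subst hι
  have hp₀ := map_preimage_of_subset_range ι (h.pair_subset p₀ h.mem)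
  refine ⟨?_, fun _ _ => Set.subset_univ _, ?_, fun _ _ => Set.subset_univ _, ?_, ?_, ?_, ?_⟩
  · simp only [Multiset.mem_map]
    rintro _ ⟨t, ht, rfl⟩
    rw [← card_map ι, map_preimage_of_subset_range ι (h.subset_of_mem t ht), h.card_eq_three t ht]
  · intro q hq
    rw [← card_map ι]
    exact h.card_eq_two _ (mem_filter.mp hq).2
  · intro q hq q' hq' hne
    rw [← disjoint_map ι]
    exact h.disjoint _ (mem_filter.mp hq).2 _ (mem_filter.mp hq').2 (map_inj.not.mpr hne)
  · intro x _
    obtain ⟨p, hp, hxp⟩ := h.exists_mem (ι x) ⟨x, rfl⟩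
    refine ⟨p.preimage ι ι.injective.injOn, ?_, by simpa using hxp⟩
    simpa [map_preimage_of_subset_range ι (h.pair_subset p hp)] using hp
  · simpa [hp₀] using h.mem
  · intro x _ y _ hxy
    have hmap : ({x, y} : Finset W).map ι = {ι x, ι y} := by simp
    have hp₀_iff : {ι x, ι y} = p₀ ↔ {x, y} = p₀.preimage ι ι.injective.injOn := by
      rw [← hmap, ← map_inj (f := ι), hp₀]
    have hP_iff : {ι x, ι y} ∈ P ↔ {x, y} ∈ univ.filter fun q : Finset W => q.map ι ∈ P := by
      simp [hmap]
    rw [codegPair_map_preimage, hmap, h.codegPair_eq _ ⟨x, rfl⟩ _ ⟨y, rfl⟩ (ι.injective.ne hxy)]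
    simp only [hp₀_iff, hP_iff]

theorem IsMatchingLeave.sum_codegPair_add [Fintype V] (h : IsMatchingLeave Set.univ H P p₀) :
    ∑ e ∈ powersetCard 2 univ, codegPair H e + P.card + 2 = 3 * (Fintype.card V).choose 2 := by
  have hP : P ⊆ powersetCard 2 univ := fun p hp =>
    mem_powersetCard.mpr ⟨subset_univ p, h.card_eq_two p hp⟩
  have hterm : ∀ e ∈ powersetCard 2 univ,
      codegPair H e + (if e ∈ P then 1 else 0) + (if p₀ = e then 2 else 0) = 3 := by
    intro e he
    obtain ⟨x, y, hxy, rfl⟩ := Finset.card_eq_two.mp (mem_powersetCard.mp he).2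
    rw [h.codegPair_eq x trivial y trivial hxy]
    by_cases he : {x, y} = p₀
    · simp [he, h.mem]
    · rw [if_neg he, if_neg (Ne.symm he)]
      split_ifs <;> rfl
  have hsum := sum_congr rfl hterm
  rw [sum_add_distrib, sum_add_distrib, sum_boole, filter_mem_eq_inter, inter_eq_right.mpr hP,
    sum_ite_eq, if_pos (hP h.mem), sum_const, card_powersetCard, card_univ, smul_eq_mul] at hsum
  simpa [mul_comm] using hsum

theorem IsMatchingLeave.card_eq [Fintype V] (h : IsMatchingLeave Set.univ H P p₀) :
    Multiset.card H = (3 * (Fintype.card V).choose 2 - Fintype.card V / 2 - 2) / 3 := by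
  have hH := three_mul_card_eq_sum_codegPair H h.card_eq_three
  have hP := two_mul_card_eq_of_partition h.card_eq_two h.disjoint fun x => h.exists_mem x trivial
  have hsum := h.sum_codegPair_add
  omega

theorem IsMatchingLeave.codegPair_of_mem (h : IsMatchingLeave Set.univ H P p₀) {p : Finset V}
    (hp : p ∈ P) : codegPair H p = if p = p₀ then 0 else 2 := by
  obtain ⟨x, y, hxy, rfl⟩ := Finset.card_eq_two.mp (h.card_eq_two p hp)
  rw [h.codegPair_eq x trivial y trivial hxy, if_pos hp]

theorem IsMatchingLeave.codegPair_of_notMem (h : IsMatchingLeave Set.univ H P p₀) {x y : V}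
    (hxy : x ≠ y) (hnot : {x, y} ∉ P) : codegPair H {x, y} = 3 := by
  have hne : ({x, y} : Finset V) ≠ p₀ := fun h' => hnot (h' ▸ h.mem)
  rw [h.codegPair_eq x trivial y trivial hxy, if_neg hne, if_neg hnot]

theorem IsMatchingLeave.codegPair_le (h : IsMatchingLeave Set.univ H P p₀) {x y : V}
    (hxy : x ≠ y) : codegPair H {x, y} ≤ 3 := by
  rw [h.codegPair_eq x trivial y trivial hxy]
  split_ifs <;> omega

end MatchingLeave

namespace Bose

section Column

variable {R : Type*} [DecidableEq R]

def col (x : R) : Finset (R × Fin 3) := {(x, 0), (x, 1), (x, 2)}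

lemma mem_col {x : R} {p : R × Fin 3} : p ∈ col x ↔ p.1 = x := by
  obtain ⟨u, l⟩ := p
  fin_cases l <;> simp [col]

end Column

section OrbitCoordinates

variable {R : Type*} [CommRing R]

/-- `pt v` runs through the orbit `(2v,0) ↦ (v,1) ↦ (2v,2)` of `rot` (see `rot_pt`). -/
def pt (v : R) : Fin 3 → R × Fin 3 := ![(2 * v, 0), (v, 1), (2 * v, 2)]

@[simp] lemma pt_snd (v : R) (l : Fin 3) : (pt v l).2 = l := by
  fin_cases l <;> rfl

def IsAxis (a b : R × Fin 3) : Prop := a = (0, 1) ∧ b = (0, 2) ∨ a = (0, 2) ∧ b = (0, 1)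

def IsRung (l : Fin 3) (a b : R × Fin 3) : Prop := ∃ v ≠ 0, a = pt v l ∧ b = pt (-v) l

def IsArc (l : Fin 3) (a b : R × Fin 3) : Prop :=
  ∃ v ≠ 0, a = pt v l ∧ b = pt v (l + 1) ∨ a = pt v (l + 1) ∧ b = pt v l

/-- The leave of the `j`-th rotated copy of the derived system. -/
def IsLeave (j : Fin 3) (a b : R × Fin 3) : Prop :=
  IsAxis a b ∨ IsRung (j + 2) a b ∨ IsArc j a b

lemma IsAxis.levels {a b : R × Fin 3} (h : IsAxis a b) : a.1 = 0 ∧ a.2 ≠ b.2 := by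
  rcases h with ⟨rfl, rfl⟩ | ⟨rfl, rfl⟩ <;> simp

lemma IsRung.levels {l : Fin 3} {a b : R × Fin 3} (h : IsRung l a b) : a.2 = l ∧ b.2 = l := by
  obtain ⟨v, -, rfl, rfl⟩ := h
  simp

variable [Invertible (2 : R)]

lemma two_mul_ne_zero {x : R} (hx : x ≠ 0) : 2 * x ≠ 0 :=
  fun h => hx ((IsUnit.mul_right_eq_zero (isUnit_of_invertible (2 : R))).mp h)

lemma invOf_two_mul_ne_zero {x : R} (hx : x ≠ 0) : ⅟2 * x ≠ 0 :=
  fun h => hx (by linear_combination 2 * h - x * mul_invOf_self (2 : R))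

lemma two_mul_injective : Function.Injective fun x : R => 2 * x :=
  IsUnit.mul_right_injective (isUnit_of_invertible (2 : R))

lemma pt_fst_ne_zero {v : R} (hv : v ≠ 0) (l : Fin 3) : (pt v l).1 ≠ 0 := by
  fin_cases l <;> simp [pt, hv, two_mul_ne_zero hv]

lemma pt_ne_zero {v : R} (hv : v ≠ 0) (l : Fin 3) : pt v l ≠ (0, 0) :=
  fun h => pt_fst_ne_zero hv l (congrArg Prod.fst h)

lemma pt_inj {v v' : R} {l l' : Fin 3} : pt v l = pt v' l' ↔ v = v' ∧ l = l' := by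
  refine ⟨fun h => ?_, fun ⟨hv, hl⟩ => hv ▸ hl ▸ rfl⟩
  obtain rfl : l = l' := by simpa using congrArg Prod.snd h
  refine ⟨?_, rfl⟩
  fin_cases l
  all_goals first
    | exact two_mul_injective (by simpa [pt] using h)
    | simpa [pt] using h

lemma exists_pt {u : R} (hu : u ≠ 0) (l : Fin 3) : ∃ v ≠ 0, pt v l = (u, l) := by
  fin_cases l
  · exact ⟨⅟2 * u, invOf_two_mul_ne_zero hu, by simp [pt]⟩
  · exact ⟨u, hu, rfl⟩
  · exact ⟨⅟2 * u, invOf_two_mul_ne_zero hu, by simp [pt]⟩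

lemma IsArc.levels {l : Fin 3} {a b : R × Fin 3} (h : IsArc l a b) :
    a.1 ≠ 0 ∧ (a.2 = l ∧ b.2 = l + 1 ∨ a.2 = l + 1 ∧ b.2 = l) := by
  obtain ⟨v, hv, ⟨rfl, rfl⟩ | ⟨rfl, rfl⟩⟩ := h <;> simp [pt_fst_ne_zero hv]

variable [DecidableEq R]

def rot : R × Fin 3 ≃ R × Fin 3 where
  toFun p := if p.1 = 0 then p else ![(⅟2 * p.1, 1), (2 * p.1, 2), (p.1, 0)] p.2
  invFun p := if p.1 = 0 then p else ![(p.1, 2), (2 * p.1, 0), (⅟2 * p.1, 1)] p.2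
  left_inv := by
    rintro ⟨u, l⟩
    by_cases hu : u = 0
    · simp [hu]
    · fin_cases l <;> simp [hu, two_mul_ne_zero hu, invOf_two_mul_ne_zero hu]
  right_inv := by
    rintro ⟨u, l⟩
    by_cases hu : u = 0
    · simp [hu]
    · fin_cases l <;> simp [hu, two_mul_ne_zero hu, invOf_two_mul_ne_zero hu]

lemma rot_zero (l : Fin 3) : rot ((0 : R), l) = (0, l) := by
  simp [rot]

lemma rot_symm_zero (l : Fin 3) : rot.symm ((0 : R), l) = (0, l) :=
  (Equiv.symm_apply_eq rot).mpr (rot_zero l).symm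

lemma rot_symm_ne_zero {a : R × Fin 3} (ha : a ≠ (0, 0)) : rot.symm a ≠ (0, 0) := by
  rw [Ne, ← rot_symm_zero]
  exact rot.symm.injective.ne ha

lemma rot_pt {v : R} (hv : v ≠ 0) (l : Fin 3) : rot (pt v l) = pt v (l + 1) := by
  fin_cases l <;> simp [rot, pt, hv, two_mul_ne_zero hv]

lemma isAxis_rot_symm {a b : R × Fin 3} : IsAxis (rot.symm a) (rot.symm b) ↔ IsAxis a b := by
  simp only [IsAxis, Equiv.symm_apply_eq, rot_zero]

lemma isRung_rot_symm {l : Fin 3} {a b : R × Fin 3} :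
    IsRung l (rot.symm a) (rot.symm b) ↔ IsRung (l + 1) a b := by
  simp only [IsRung, Equiv.symm_apply_eq]
  exact exists_congr fun v => and_congr_right fun hv => by
    rw [rot_pt hv, rot_pt (neg_ne_zero.mpr hv)]

lemma isArc_rot_symm {l : Fin 3} {a b : R × Fin 3} :
    IsArc l (rot.symm a) (rot.symm b) ↔ IsArc (l + 1) a b := by
  simp only [IsArc, Equiv.symm_apply_eq]
  exact exists_congr fun v => and_congr_right fun hv => by rw [rot_pt hv, rot_pt hv]

lemma isLeave_rot_symm {j : Fin 3} {a b : R × Fin 3} :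
    IsLeave j (rot.symm a) (rot.symm b) ↔ IsLeave (j + 1) a b := by
  rw [IsLeave, IsLeave, isAxis_rot_symm, isRung_rot_symm, isArc_rot_symm, add_right_comm]

lemma codegPair_map_rot (M : Multiset (Finset (R × Fin 3))) (a b : R × Fin 3) :
    codegPair (M.map (map rot.toEmbedding)) {a, b} = codegPair M {rot.symm a, rot.symm b} := by
  rw [codegPair_map_equiv]
  simp

end OrbitCoordinates

section Blocks

variable {R : Type*} [CommRing R] [DecidableEq R]

def row (w d : R) (i : Fin 3) : Finset (R × Fin 3) := {(w + d, i), (w - d, i), (w, i + 1)}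

lemma mem_row {w d u : R} {i l : Fin 3} :
    (u, l) ∈ row w d i ↔ l = i ∧ (u = w + d ∨ u = w - d) ∨ l = i + 1 ∧ u = w := by
  simp only [row, mem_insert, mem_singleton, Prod.mk.injEq]
  tauto

lemma row_neg (w d : R) (i : Fin 3) : row w (-d) i = row w d i := by
  ext ⟨u, l⟩
  simp only [mem_row, ← sub_eq_add_neg, sub_neg_eq_add]
  tauto

lemma row_zero_two (v : R) : row 0 (2 * v) 2 = insert (0, 0) {pt v 2, pt (-v) 2} := by
  ext ⟨u, l⟩
  simp [mem_row, pt]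
  tauto

lemma row_self_zero (v : R) : row v v 0 = insert (0, 0) {pt v 0, pt v 1} := by
  ext ⟨u, l⟩
  simp [mem_row, pt, ← two_mul]
  tauto

def tri (v : R) : Finset (R × Fin 3) := {pt v 0, pt v 1, pt v 2}

lemma mem_tri {v : R} {a : R × Fin 3} : a ∈ tri v ↔ ∃ l, a = pt v l := by
  simp only [tri, mem_insert, mem_singleton]
  constructor
  · rintro (h | h | h) <;> exact ⟨_, h⟩
  · rintro ⟨l, rfl⟩
    fin_cases l <;> simp

def axisPair : Finset (R × Fin 3) := {(0, 1), (0, 2)}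

lemma pair_eq_axisPair_iff {a b : R × Fin 3} : ({a, b} : Finset _) = axisPair ↔ IsAxis a b :=
  Finset.pair_eq_pair_iff

def rung (v : R) (l : Fin 3) : Finset (R × Fin 3) := {pt v l, pt (-v) l}

lemma eq_rung_of_mem {v : R} {l : Fin 3} {c : R × Fin 3} (hc : c ∈ rung v l) :
    ∃ w, c = pt w l ∧ rung v l = rung w l := by
  simp only [rung, mem_insert, mem_singleton] at hc
  rcases hc with rfl | rfl
  · exact ⟨v, rfl, rfl⟩
  · exact ⟨-v, rfl, by rw [rung, rung, neg_neg, pair_comm]⟩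

variable [Fintype R]

def blocks : Finset (Finset (R × Fin 3)) :=
  univ.image col ∪
    ((univ : Finset (R × R × Fin 3)).filter (·.2.1 ≠ 0)).image fun p => row p.1 p.2.1 p.2.2

lemma mem_blocks {t : Finset (R × Fin 3)} :
    t ∈ blocks ↔ (∃ x, col x = t) ∨ ∃ w d i, d ≠ 0 ∧ row w d i = t := by
  simp [blocks]

lemma filter_blocks_col (x : R) (i : Fin 3) :
    blocks.filter ({(x, i), (x, i + 1)} ⊆ ·) = {col x} := by
  rw [eq_singleton_iff_unique_mem, mem_filter, mem_blocks]
  refine ⟨⟨Or.inl ⟨x, rfl⟩, by simp [insert_subset_iff, mem_col]⟩, ?_⟩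
  rintro t ht
  rw [mem_filter, mem_blocks, insert_subset_iff, singleton_subset_iff] at ht
  obtain ⟨⟨v, rfl⟩ | ⟨w, d, j, hd, rfl⟩, hxt, hyt⟩ := ht
  · rw [show v = x from (mem_col.mp hxt).symm]
  rw [mem_row] at hxt hyt
  rcases hxt with ⟨hi, hx | hx⟩ | ⟨hi, hx⟩ <;> rcases hyt with ⟨hj, hy⟩ | ⟨hj, hy⟩
  all_goals first
    | omega
    | exact absurd (by linear_combination hx - hy) hd
    | exact absurd (by linear_combination hy - hx) hd

lemma filter_blocks_cross {x y : R} (hxy : x ≠ y) (i : Fin 3) :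
    blocks.filter ({(x, i), (y, i + 1)} ⊆ ·) = {row y (x - y) i} := by
  rw [eq_singleton_iff_unique_mem, mem_filter, mem_blocks]
  refine ⟨⟨Or.inr ⟨y, x - y, i, sub_ne_zero.mpr hxy, rfl⟩,
    by simp [insert_subset_iff, mem_row]⟩, ?_⟩
  rintro t ht
  rw [mem_filter, mem_blocks, insert_subset_iff, singleton_subset_iff] at ht
  obtain ⟨⟨v, rfl⟩ | ⟨w, d, j, hd, rfl⟩, hxt, hyt⟩ := ht
  · exact absurd ((mem_col.mp hxt).trans (mem_col.mp hyt).symm) hxy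
  rw [mem_row] at hxt hyt
  rcases hxt with ⟨rfl, hx | hx⟩ | ⟨hi, hx⟩ <;> rcases hyt with ⟨hj, hy⟩ | ⟨hj, rfl⟩
  all_goals first
    | omega
    | skip
  · obtain rfl : d = x - y := by linear_combination -hx
    rfl
  · obtain rfl : d = -(x - y) := by linear_combination hx
    exact row_neg _ _ _

def derived : Multiset (Finset (R × Fin 3)) := blocks.val.filter ((0, 0) ∉ ·)

def triangles : Multiset (Finset (R × Fin 3)) := (univ.erase 0).val.map tri

def matching : Finset (Finset (R × Fin 3)) :=
  insert axisPair (((univ.erase 0) ×ˢ univ).image fun p : R × Fin 3 => rung p.1 p.2)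

lemma mem_matching {p : Finset (R × Fin 3)} :
    p ∈ matching ↔ p = axisPair ∨ ∃ v ≠ 0, ∃ l, p = rung v l := by
  simp [matching, eq_comm]

lemma pair_mem_matching_iff {a b : R × Fin 3} :
    {a, b} ∈ matching ↔ IsAxis a b ∨ ∃ l, IsRung l a b := by
  rw [mem_matching, pair_eq_axisPair_iff]
  refine or_congr_right ⟨?_, ?_⟩
  · rintro ⟨v, hv, l, h⟩
    rcases Finset.pair_eq_pair_iff.mp h with ⟨rfl, rfl⟩ | ⟨rfl, rfl⟩
    · exact ⟨l, v, hv, rfl, rfl⟩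
    · exact ⟨l, -v, neg_ne_zero.mpr hv, rfl, by rw [neg_neg]⟩
  · rintro ⟨l, v, hv, rfl, rfl⟩
    exact ⟨v, hv, l, rfl⟩

variable [Invertible (2 : R)]

lemma filter_blocks_row {x y w d : R} (hd : d ≠ 0) (hx : x = w + d) (hy : y = w - d) (i : Fin 3) :
    blocks.filter ({(x, i), (y, i)} ⊆ ·) = {row w d i} := by
  have hxy : x ≠ y := fun h => two_mul_ne_zero hd (by linear_combination h - hx + hy)
  rw [eq_singleton_iff_unique_mem, mem_filter, mem_blocks]
  refine ⟨⟨Or.inr ⟨w, d, i, hd, rfl⟩, by simp [insert_subset_iff, mem_row, hx, hy]⟩, ?_⟩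
  rintro t ht
  rw [mem_filter, mem_blocks, insert_subset_iff, singleton_subset_iff] at ht
  obtain ⟨⟨v, rfl⟩ | ⟨w', d', j, hd', rfl⟩, hxt, hyt⟩ := ht
  · exact absurd ((mem_col.mp hxt).trans (mem_col.mp hyt).symm) hxy
  rw [mem_row] at hxt hyt
  rcases hxt with ⟨rfl, hx' | hx'⟩ | ⟨rfl, hx'⟩ <;> rcases hyt with ⟨hj, hy' | hy'⟩ | ⟨hj, hy'⟩
  all_goals first
    | exact absurd (hx'.trans hy'.symm) hxy
    | omega
    | skip
  · obtain rfl : w' = w := two_mul_injective (by linear_combination hx + hy - hx' - hy')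
    obtain rfl : d' = d := by linear_combination hx - hx'
    rfl
  · obtain rfl : w' = w := two_mul_injective (by linear_combination hx + hy - hx' - hy')
    obtain rfl : d' = -d := by linear_combination hx' - hx
    exact row_neg _ _ _

lemma codegPair_blocks {a b : R × Fin 3} (hab : a ≠ b) : codegPair blocks.val {a, b} = 1 := by
  have hcross : ∀ (x y : R) (i : Fin 3), (blocks.filter ({(x, i), (y, i + 1)} ⊆ ·)).card = 1 := by
    intro x y i
    by_cases hxy : x = y
    · rw [hxy, filter_blocks_col, card_singleton]
    · rw [filter_blocks_cross hxy, card_singleton]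
  obtain ⟨x, i⟩ := a
  obtain ⟨y, j⟩ := b
  rw [codegPair_val]
  obtain rfl | rfl | rfl : j = i ∨ j = i + 1 ∨ i = j + 1 := by omega
  · have hxy : x ≠ y := fun h => hab (by rw [h])
    rw [filter_blocks_row (w := ⅟2 * (x + y)) (d := ⅟2 * (x - y)) _ _ _, card_singleton]
    · exact invOf_two_mul_ne_zero (sub_ne_zero.mpr hxy)
    · linear_combination (-x) * (invOf_mul_self (2 : R))
    · linear_combination (-y) * (invOf_mul_self (2 : R))
  · exact hcross x y i
  · rw [pair_comm]
    exact hcross y x j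

lemma card_of_mem_blocks {t : Finset (R × Fin 3)} (ht : t ∈ blocks) : t.card = 3 := by
  rcases mem_blocks.mp ht with ⟨x, rfl⟩ | ⟨w, d, i, hd, rfl⟩
  · rw [col, card_eq_three]
    exact ⟨_, _, _, by simp, by simp, by simp, rfl⟩
  · have hi : i ≠ i + 1 := by omega
    have hwd : w + d ≠ w - d := fun h => two_mul_ne_zero hd (by linear_combination h)
    rw [row, card_eq_three]
    exact ⟨_, _, _, by simp [hwd], by simp [hi], by simp [hi], rfl⟩

lemma eq_of_zero_mem_blocks {t : Finset (R × Fin 3)} (ht : t ∈ blocks) (hz : (0, 0) ∈ t) :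
    t = col 0 ∨ ∃ v ≠ 0, t = row 0 (2 * v) 2 ∨ t = row v v 0 := by
  rcases mem_blocks.mp ht with ⟨x, rfl⟩ | ⟨w, d, i, hd, rfl⟩
  · left
    rw [← (mem_col.mp hz : (0 : R) = x)]
  right
  rw [mem_row] at hz
  rcases hz with ⟨rfl, hw | hw⟩ | ⟨hi, rfl⟩
  · refine ⟨-d, neg_ne_zero.mpr hd, Or.inr ?_⟩
    rw [row_neg, show w = -d by linear_combination -hw]
  · exact ⟨d, hd, Or.inr (by rw [show w = d by linear_combination -hw])⟩
  · obtain rfl : i = 2 := by omega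
    exact ⟨⅟2 * d, invOf_two_mul_ne_zero hd, Or.inl (by rw [mul_invOf_cancel_left])⟩

lemma insert_zero_mem_blocks_iff {a b : R × Fin 3} (ha : a ≠ (0, 0)) (hb : b ≠ (0, 0)) :
    insert (0, 0) {a, b} ∈ blocks ↔ IsLeave 0 a b := by
  rw [IsLeave, zero_add]
  constructor
  · intro hmem
    rcases eq_of_zero_mem_blocks hmem (mem_insert_self _ _) with h | ⟨v, hv, h | h⟩
    · exact Or.inl (pair_eq_or_of_insert_eq h ha hb (by simp) (by simp))
    · rw [row_zero_two] at h
      rcases pair_eq_or_of_insert_eq h ha hb (pt_ne_zero hv 2)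
        (pt_ne_zero (neg_ne_zero.mpr hv) 2) with ⟨rfl, rfl⟩ | ⟨rfl, rfl⟩
      · exact Or.inr (Or.inl ⟨v, hv, rfl, rfl⟩)
      · exact Or.inr (Or.inl ⟨-v, neg_ne_zero.mpr hv, rfl, by rw [neg_neg]⟩)
    · rw [row_self_zero] at h
      exact Or.inr (Or.inr ⟨v, hv,
        pair_eq_or_of_insert_eq h ha hb (pt_ne_zero hv 0) (pt_ne_zero hv 1)⟩)
  · rw [mem_blocks]
    rintro (h | ⟨v, hv, rfl, rfl⟩ | ⟨v, hv, h⟩)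
    · refine Or.inl ⟨0, ?_⟩
      rcases h with ⟨rfl, rfl⟩ | ⟨rfl, rfl⟩
      · rfl
      · rw [pair_comm]
        rfl
    · exact Or.inr ⟨0, 2 * v, 2, two_mul_ne_zero hv, row_zero_two v⟩
    · refine Or.inr ⟨v, v, 0, hv, ?_⟩
      rcases h with ⟨rfl, rfl⟩ | ⟨rfl, rfl⟩
      · exact row_self_zero v
      · rw [pair_comm]
        exact row_self_zero v

open scoped Classical in
lemma codegPair_derived {a b : R × Fin 3} (hab : a ≠ b) (ha : a ≠ (0, 0)) (hb : b ≠ (0, 0)) :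
    codegPair derived {a, b} = if IsLeave 0 a b then 0 else 1 := by
  have hsplit := codegPair_filter_notMem_add blocks.val (0, 0) {a, b}
  have hcard : (insert (0, 0) {a, b} : Finset (R × Fin 3)).card = 3 := by
    rw [card_eq_three]
    exact ⟨_, _, _, ha.symm, hb.symm, hab, rfl⟩
  rw [codegPair_blocks hab, codegPair_val_eq_ite (fun t => card_of_mem_blocks) hcard] at hsplit
  simp only [insert_zero_mem_blocks_iff ha hb] at hsplit
  rw [derived]
  split_ifs at hsplit ⊢ <;> omega

open scoped Classical in
lemma codegPair_triangles {a b : R × Fin 3} (hab : a ≠ b) :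
    codegPair triangles {a, b} = if ∃ l, IsArc l a b then 1 else 0 := by
  rw [codegPair, triangles, Multiset.filter_map, Multiset.card_map, ← filter_val, card_val]
  simp only [Function.comp_def, insert_subset_iff, singleton_subset_iff, mem_tri]
  split_ifs with harc
  · obtain ⟨l, v, hv, hpts⟩ := harc
    rw [card_eq_one]
    refine ⟨v, eq_singleton_iff_unique_mem.mpr ⟨?_, ?_⟩⟩
    · rcases hpts with ⟨rfl, rfl⟩ | ⟨rfl, rfl⟩ <;> simp [hv]
    · rintro v' hv'
      obtain ⟨-, ⟨l', hl'⟩, -⟩ := mem_filter.mp hv'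
      rcases hpts with ⟨rfl, -⟩ | ⟨rfl, -⟩ <;> exact (pt_inj.mp hl').1.symm
  · rw [card_eq_zero, filter_eq_empty_iff]
    rintro v hv ⟨⟨l, rfl⟩, ⟨l', rfl⟩⟩
    have hll' : l ≠ l' := fun h => hab (h ▸ rfl)
    have hv0 : v ≠ 0 := (mem_erase.mp hv).1
    obtain rfl | rfl : l' = l + 1 ∨ l = l' + 1 := by omega
    · exact harc ⟨l, v, hv0, Or.inl ⟨rfl, rfl⟩⟩
    · exact harc ⟨l', v, hv0, Or.inr ⟨rfl, rfl⟩⟩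

def pts : Multiset (Finset (R × Fin 3)) :=
  derived + derived.map (map rot.toEmbedding) +
    (derived.map (map rot.toEmbedding)).map (map rot.toEmbedding) + triangles

open scoped Classical in
lemma codegPair_pts {a b : R × Fin 3} (hab : a ≠ b) (ha : a ≠ (0, 0)) (hb : b ≠ (0, 0)) :
    codegPair pts {a, b} = if IsAxis a b then 0 else if ∃ l, IsRung l a b then 2 else 3 := by
  have hab' := rot.symm.injective.ne hab
  rw [pts, codegPair_add, codegPair_add, codegPair_add, codegPair_map_rot, codegPair_map_rot,
    codegPair_map_rot, codegPair_derived hab ha hb,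
    codegPair_derived hab' (rot_symm_ne_zero ha) (rot_symm_ne_zero hb),
    codegPair_derived (rot.symm.injective.ne hab') (rot_symm_ne_zero (rot_symm_ne_zero ha))
      (rot_symm_ne_zero (rot_symm_ne_zero hb)), codegPair_triangles hab]
  simp only [isLeave_rot_symm]
  simp only [IsLeave, exists_fin_three]
  have hA : IsAxis a b → a.1 = 0 ∧ a.2 ≠ b.2 := IsAxis.levels
  have hR : ∀ l, IsRung l a b → a.2 = l ∧ b.2 = l := fun l => IsRung.levels
  have hT : ∀ l, IsArc l a b → a.1 ≠ 0 ∧ (a.2 = l ∧ b.2 = l + 1 ∨ a.2 = l + 1 ∧ b.2 = l) :=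
    fun l => IsArc.levels
  -- the levels of `a` and `b` tell the seven kinds of pairs apart
  grind

lemma card_eq_three_and_zero_notMem_of_mem_pts {t : Finset (R × Fin 3)} (ht : t ∈ pts) :
    t.card = 3 ∧ (0, 0) ∉ t := by
  have hderived : ∀ s ∈ (derived : Multiset (Finset (R × Fin 3))), s.card = 3 ∧ (0, 0) ∉ s :=
    fun s hs =>
      have hs := Multiset.mem_filter.mp hs
      ⟨card_of_mem_blocks hs.1, hs.2⟩
  have hrot : ∀ s : Finset (R × Fin 3), s.card = 3 ∧ (0, 0) ∉ s →
      (s.map rot.toEmbedding).card = 3 ∧ (0, 0) ∉ s.map rot.toEmbedding := by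
    rintro s ⟨hcard, hz⟩
    rw [card_map, mem_map_equiv, rot_symm_zero]
    exact ⟨hcard, hz⟩
  simp only [pts, triangles, Multiset.mem_add, Multiset.mem_map] at ht
  rcases ht with ((hs | ⟨s, hs, rfl⟩) | ⟨s, ⟨s', hs', rfl⟩, rfl⟩) | ⟨v, hv, rfl⟩
  · exact hderived t hs
  · exact hrot s (hderived s hs)
  · exact hrot _ (hrot s' (hderived s' hs'))
  · have hv : v ≠ 0 := (mem_erase.mp hv).1
    refine ⟨card_eq_three.mpr ⟨_, _, _, by simp [pt_inj], by simp [pt_inj], by simp [pt_inj], rfl⟩,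
      fun h => ?_⟩
    obtain ⟨l, hl⟩ := mem_tri.mp h
    exact pt_ne_zero hv l hl.symm

lemma disjoint_of_mem_matching {p q : Finset (R × Fin 3)} (hp : p ∈ matching)
    (hq : q ∈ matching) (hpq : p ≠ q) : Disjoint p q := by
  have haxis : ∀ c ∈ axisPair, (c : R × Fin 3).1 = 0 := by simp [axisPair]
  have hrung : ∀ {v : R} {l : Fin 3}, v ≠ 0 → ∀ c ∈ rung v l, c.1 ≠ 0 := fun {v l} hv c hc => by
    simp only [rung, mem_insert, mem_singleton] at hc
    rcases hc with rfl | rfl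
    exacts [pt_fst_ne_zero hv l, pt_fst_ne_zero (neg_ne_zero.mpr hv) l]
  rw [disjoint_left]
  intro c hcp hcq
  rcases mem_matching.mp hp with rfl | ⟨v, hv, l, rfl⟩ <;>
    rcases mem_matching.mp hq with rfl | ⟨v', hv', l', rfl⟩
  · exact hpq rfl
  · exact hrung hv' c hcq (haxis c hcp)
  · exact hrung hv c hcp (haxis c hcq)
  · obtain ⟨w, rfl, hw⟩ := eq_rung_of_mem hcp
    obtain ⟨w', hww', hw'⟩ := eq_rung_of_mem hcq
    obtain ⟨rfl, rfl⟩ := pt_inj.mp hww'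
    exact hpq (hw.trans hw'.symm)

lemma exists_mem_matching {c : R × Fin 3} (hc : c ≠ (0, 0)) : ∃ p ∈ matching, c ∈ p := by
  obtain ⟨u, l⟩ := c
  by_cases hu : u = 0
  · subst hu
    refine ⟨axisPair, mem_insert_self _ _, ?_⟩
    have hl : l ≠ 0 := fun h => hc (by rw [h])
    fin_cases l <;> simp_all [axisPair]
  · obtain ⟨v, hv, hvl⟩ := exists_pt hu l
    exact ⟨rung v l, mem_matching.mpr (Or.inr ⟨v, hv, l, rfl⟩), by simp [rung, hvl]⟩

open scoped Classical in
lemma isMatchingLeave_pts :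
    IsMatchingLeave {p | p ≠ (0, 0)} (pts (R := R)) matching axisPair where
  card_eq_three t ht := (card_eq_three_and_zero_notMem_of_mem_pts ht).1
  subset_of_mem t ht c hc := fun h => (card_eq_three_and_zero_notMem_of_mem_pts ht).2 (h ▸ hc)
  card_eq_two p hp := by
    rcases mem_matching.mp hp with rfl | ⟨v, hv, l, rfl⟩
    · rw [axisPair, card_pair]
      simp
    · rw [rung, card_pair]
      simpa [pt_inj] using fun h => two_mul_ne_zero hv (by linear_combination h)
  pair_subset p hp := by
    intro c hc
    rcases mem_matching.mp hp with rfl | ⟨v, hv, l, rfl⟩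
    · simp only [axisPair, coe_pair, Set.mem_insert_iff, Set.mem_singleton_iff] at hc
      rcases hc with rfl | rfl <;> simp
    · simp only [rung, coe_pair, Set.mem_insert_iff, Set.mem_singleton_iff] at hc
      rcases hc with rfl | rfl
      exacts [pt_ne_zero hv l, pt_ne_zero (neg_ne_zero.mpr hv) l]
  disjoint _ hp _ hq := disjoint_of_mem_matching hp hq
  exists_mem _ := exists_mem_matching
  mem := mem_insert_self _ _
  codegPair_eq a ha b hb hab := by
    rw [codegPair_pts hab ha hb]
    simp only [pair_eq_axisPair_iff, pair_mem_matching_iff]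
    by_cases h : IsAxis a b <;> simp [h]

end Blocks

end Bose

theorem exists_isMatchingLeave (k : ℕ) :
    ∃ (H : Multiset (Finset (Fin (6 * k + 2)))) (P : Finset (Finset (Fin (6 * k + 2))))
      (p₀ : Finset (Fin (6 * k + 2))), IsMatchingLeave Set.univ H P p₀ := by
  have h2 : IsUnit (2 : ZMod (2 * k + 1)) := by
    simpa using (ZMod.isUnit_iff_coprime 2 (2 * k + 1)).mpr
      (Nat.coprime_two_left.mpr (odd_two_mul_add_one k))
  let _ : Invertible (2 : ZMod (2 * k + 1)) := h2.invertible
  let s : Set (ZMod (2 * k + 1) × Fin 3) := {p | p ≠ (0, 0)}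
  have hcard : Fintype.card s = 6 * k + 2 := by
    rw [Set.card_ne_eq, Fintype.card_prod, ZMod.card, Fintype.card_fin]
    omega
  let e := Fintype.equivFinOfCardEq hcard
  let ι := e.symm.toEmbedding.trans (Function.Embedding.subtype (· ∈ s))
  have hι : Set.range ι = s := by
    ext p
    refine ⟨?_, fun hp => ⟨e ⟨p, hp⟩, by simp [ι]⟩⟩
    rintro ⟨x, rfl⟩
    exact (e.symm x).2
  exact ⟨_, _, _, Bose.isMatchingLeave_pts.comap ι hι⟩

theorem stmt_13_general (ν : ℕ) (hmod : ν % 6 = 2) :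
    ∃ H : Multiset (Finset (Fin ν)),
      (∀ t ∈ H, t.card = 3) ∧
      (∀ x y : Fin ν, x ≠ y → codegPair H {x, y} ≤ 3) ∧
      Multiset.card H = (3 * ν.choose 2 - ν / 2 - 2) / 3 ∧
      ∃ P : Finset (Finset (Fin ν)),
        P.card = ν / 2 ∧
        (∀ p ∈ P, p.card = 2) ∧
        (∀ p ∈ P, ∀ q ∈ P, p ≠ q → Disjoint p q) ∧
        (∀ v : Fin ν, ∃ p ∈ P, v ∈ p) ∧
        (∃ p₀ ∈ P, codegPair H p₀ = 0 ∧
          ∀ p ∈ P, p ≠ p₀ → codegPair H p = 2) ∧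
        (∀ x y : Fin ν, x ≠ y → ({x, y} : Finset (Fin ν)) ∉ P →
          codegPair H {x, y} = 3) := by
  obtain ⟨k, rfl⟩ : ∃ k, ν = 6 * k + 2 := ⟨ν / 6, by omega⟩
  obtain ⟨H, P, p₀, h⟩ := exists_isMatchingLeave k
  have hP := two_mul_card_eq_of_partition h.card_eq_two h.disjoint fun x => h.exists_mem x trivial
  rw [Fintype.card_fin] at hP
  refine ⟨H, h.card_eq_three, fun x y => h.codegPair_le, by simpa using h.card_eq, P, by omega,
    h.card_eq_two, h.disjoint, fun x => h.exists_mem x trivial,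
    ⟨p₀, h.mem, by simp [h.codegPair_of_mem h.mem], fun p hp hne => ?_⟩,
    fun x y => h.codegPair_of_notMem⟩
  rw [h.codegPair_of_mem hp, if_neg hne]

/-- for `ν ≡ 2 (mod 6)` there is a `PTS(ν, 3)` with exactly
`(3·C(ν,2) − ν/2 − 2)/3` triples whose leave consists of `ν/2` pairwise disjoint
edges: a partition into `ν/2` pairs, one with codegree `0`, the rest with codegree `2`,
all other pairs with codegree `3`. -/
theorem stmt_13 (ν : ℕ) (hpos : 0 < ν) (hmod : ν % 6 = 2) :
    ∃ H : Multiset (Finset (Fin ν)),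
      (∀ t ∈ H, t.card = 3) ∧
      (∀ x y : Fin ν, x ≠ y → codegPair H {x, y} ≤ 3) ∧
      Multiset.card H = (3 * ν.choose 2 - ν / 2 - 2) / 3 ∧
      ∃ P : Finset (Finset (Fin ν)),
        P.card = ν / 2 ∧
        (∀ p ∈ P, p.card = 2) ∧
        (∀ p ∈ P, ∀ q ∈ P, p ≠ q → Disjoint p q) ∧
        (∀ v : Fin ν, ∃ p ∈ P, v ∈ p) ∧
        (∃ p₀ ∈ P, codegPair H p₀ = 0 ∧
          ∀ p ∈ P, p ≠ p₀ → codegPair H p = 2) ∧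
        (∀ x y : Fin ν, x ≠ y → ({x, y} : Finset (Fin ν)) ∉ P →
          codegPair H {x, y} = 3) :=
  stmt_13_general ν hmod
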